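/- arXiv:2209.07597 — 4 statements merged into one kernel-verified Lean document; each statement's English description precedes it below -/
import Mathlib

section
/- Let X and Y be compact metric spaces and let π : X → Y be a continuous surjection. Suppose that for every ε > 0 there exists a homeomorphism g : X → X such that (1) dist(π ∘ g, π) < ε in the supremum metric, and (2) for every y ∈ Y, the diameter of g(π⁻¹(y)) is less than ε. Then for every ε > 0 there exists a homeomorphism H : X → Y with dist(H, π) < ε in the supremum metric; in particular X and Y are homeomorphic. -/
open Metric Set

/-- Bing Shrinking Criterion ("if" direction): if a continuous surjection `π`
between compact metric spaces can be `ε`-shrunk by self-homeomorphisms of `X`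
for every `ε > 0`, then `π` is approximable by homeomorphisms; in particular
`X` and `Y` are homeomorphic. -/
theorem bing_shrinking_criterion
    {X Y : Type*} [MetricSpace X] [CompactSpace X] [MetricSpace Y] [CompactSpace Y]
    (π : C(X, Y)) (hsurj : Function.Surjective π)
    (h : ∀ ε : ℝ, 0 < ε → ∃ g : X ≃ₜ X,
      dist (π.comp (g : C(X, X))) π < ε ∧
      ∀ y : Y, Metric.diam ((g : X → X) '' (π ⁻¹' {y})) < ε) :
    (∀ ε : ℝ, 0 < ε → ∃ H : X ≃ₜ Y, dist (H : C(X, Y)) π < ε) ∧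
      Nonempty (X ≃ₜ Y) := by
  have key : ∀ ε : ℝ, 0 < ε → ∃ H : X ≃ₜ Y, dist (H : C(X, Y)) π < ε := by
    set R : Set C(X, Y) := Set.range fun g : X ≃ₜ X => π.comp (g : C(X, X)) with hR
    set D : Set C(X, Y) := closure R with hD
    -- π lies in D
    have hπD : π ∈ D := by
      rw [hD, Metric.mem_closure_iff]
      intro ε hε
      obtain ⟨g, hg, -⟩ := h ε hε
      exact ⟨_, ⟨g, rfl⟩, by rwa [dist_comm]⟩
    -- The open sets for Baire
    set O : ℕ → Set C(X, Y) :=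
      fun n => {f | ∀ x x' : X, f x = f x' → dist x x' < 1 / (n + 1)} with hO
    have hn_pos : ∀ n : ℕ, (0:ℝ) < 1 / (n + 1) := by
      intro n; positivity
    -- Openness
    have hO_open : ∀ n, IsOpen (O n) := by
      intro n
      rw [Metric.isOpen_iff]
      intro f hf
      set K : Set (X × X) := {p | 1 / ((n:ℝ) + 1) ≤ dist p.1 p.2} with hK
      have hKcl : IsClosed K :=
        isClosed_le continuous_const (continuous_fst.dist continuous_snd)
      rcases K.eq_empty_or_nonempty with hKe | hKne
      · refine ⟨1, one_pos, fun g _ x x' _ => ?_⟩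
        by_contra hc
        push_neg at hc
        have hmem : (x, x') ∈ K := hc
        rw [hKe] at hmem
        exact absurd hmem (Set.notMem_empty _)
      · have hKc : IsCompact K := hKcl.isCompact
        obtain ⟨p₀, hp₀K, hp₀min⟩ := hKc.exists_isMinOn hKne
          ((f.continuous.comp continuous_fst).dist (f.continuous.comp continuous_snd)).continuousOn
        have hc_pos : 0 < dist (f p₀.1) (f p₀.2) := by
          rw [dist_pos]
          intro heq
          have := hf p₀.1 p₀.2 heq
          have h2 : 1 / ((n:ℝ) + 1) ≤ dist p₀.1 p₀.2 := hp₀K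
          linarith
        refine ⟨dist (f p₀.1) (f p₀.2) / 2, by positivity, fun g hg x x' hxx' => ?_⟩
        rw [mem_ball] at hg
        rw [dist_comm] at hg
        by_contra hc
        push_neg at hc
        have hmem : (x, x') ∈ K := hc
        have hmin := hp₀min hmem
        have h1 : dist (f x) (g x) ≤ dist f g := ContinuousMap.dist_apply_le_dist x
        have h2 : dist (g x') (f x') ≤ dist f g := by
          rw [dist_comm (g x')]
          exact ContinuousMap.dist_apply_le_dist x'
        have h3 : dist (f x) (f x') ≤ dist (f x) (g x) + dist (g x') (f x') := by
          calc dist (f x) (f x') ≤ dist (f x) (g x) + dist (g x) (f x') := dist_triangle _ _ _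
            _ = dist (f x) (g x) + dist (g x') (f x') := by rw [hxx']
        have hmin' : dist (f p₀.1) (f p₀.2) ≤ dist (f x) (f x') := hmin
        linarith
    -- Density of O n in D (as a statement about points of D)
    have hO_dense : ∀ (n : ℕ) (p : C(X,Y)), p ∈ D → ∀ δ : ℝ, 0 < δ →
        ∃ c ∈ R, c ∈ O n ∧ dist c p < δ := by
      intro n p hp δ hδ
      obtain ⟨q, ⟨g₀, rfl⟩, hq⟩ := Metric.mem_closure_iff.mp hp (δ/2) (by positivity)
      -- uniform continuity of g₀.symm
      have hu : UniformContinuous (g₀.symm : X → X) :=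
        CompactSpace.uniformContinuous_of_continuous g₀.symm.continuous
      obtain ⟨δ₀, hδ₀, H₀⟩ := Metric.uniformContinuous_iff.mp hu (1/(n+1)) (hn_pos n)
      set ε' : ℝ := min δ₀ (δ/2) with hε'
      have hε'pos : 0 < ε' := lt_min hδ₀ (by positivity)
      obtain ⟨g, hg1, hg2⟩ := h ε' hε'pos
      refine ⟨π.comp ((g₀.trans g.symm : X ≃ₜ X) : C(X,X)), ⟨g₀.trans g.symm, rfl⟩, ?_, ?_⟩
      · -- membership in O n
        intro x x' hxx'
        simp only [ContinuousMap.comp_apply, Homeomorph.trans_apply,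
          ContinuousMap.coe_coe] at hxx'
        set y : Y := π (g.symm (g₀ x)) with hy
        have hm1 : g₀ x ∈ (g : X → X) '' (π ⁻¹' {y}) :=
          ⟨g.symm (g₀ x), by simp [hy], by simp⟩
        have hm2 : g₀ x' ∈ (g : X → X) '' (π ⁻¹' {y}) :=
          ⟨g.symm (g₀ x'), by simp [hy, ← hxx'], by simp⟩
        have hbdd : Bornology.IsBounded ((g : X → X) '' (π ⁻¹' {y})) :=
          isCompact_univ.isBounded.subset (Set.subset_univ _)
        have hdd : dist (g₀ x) (g₀ x') ≤ Metric.diam ((g : X → X) '' (π ⁻¹' {y})) :=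
          Metric.dist_le_diam_of_mem hbdd hm1 hm2
        have hlt : dist (g₀ x) (g₀ x') < δ₀ :=
          lt_of_lt_of_le (hdd.trans_lt (hg2 y)) (min_le_left _ _)
        have := H₀ hlt
        simpa using this
      · -- distance estimate
        have step1 : dist (π.comp (g.symm : C(X,X))) π ≤ dist (π.comp (g : C(X,X))) π := by
          rw [ContinuousMap.dist_le dist_nonneg]
          intro x
          have : dist (π (g.symm x)) (π (g (g.symm x))) ≤ dist π (π.comp (g : C(X,X))) := by
            have := ContinuousMap.dist_apply_le_dist (f := π) (g := π.comp (g : C(X,X))) (g.symm x)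
            simpa using this
          simpa [dist_comm] using this
        have step2 : dist (π.comp ((g₀.trans g.symm : X ≃ₜ X) : C(X,X))) (π.comp (g₀ : C(X,X)))
            ≤ dist (π.comp (g.symm : C(X,X))) π := by
          rw [ContinuousMap.dist_le dist_nonneg]
          intro x
          have := ContinuousMap.dist_apply_le_dist
            (f := π.comp (g.symm : C(X,X))) (g := π) (g₀ x)
          simpa using this
        have hfin : dist (π.comp ((g₀.trans g.symm : X ≃ₜ X) : C(X,X))) (π.comp (g₀ : C(X,X)))
            < δ/2 := lt_of_le_of_lt (step2.trans step1) (lt_of_lt_of_le hg1 (min_le_right _ _))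
        calc dist (π.comp ((g₀.trans g.symm : X ≃ₜ X) : C(X,X))) p
            ≤ dist (π.comp ((g₀.trans g.symm : X ≃ₜ X) : C(X,X))) (π.comp (g₀ : C(X,X)))
              + dist (π.comp (g₀ : C(X,X))) p := dist_triangle _ _ _
          _ < δ/2 + δ/2 := by
              have : dist (π.comp (g₀ : C(X,X))) p < δ/2 := by rwa [dist_comm]
              linarith
          _ = δ := by ring
    -- Baire
    have hDcl : IsClosed D := isClosed_closure
    haveI : CompleteSpace D := hDcl.completeSpace_coe
    have hdense : Dense (⋂ n : ℕ, (Subtype.val ⁻¹' (O n) : Set D)) := by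
      apply dense_iInter_of_isOpen
      · exact fun n => (hO_open n).preimage continuous_subtype_val
      · intro n
        rw [Metric.dense_iff]
        rintro ⟨p, hp⟩ r hr
        obtain ⟨c, hcR, hcO, hcd⟩ := hO_dense n p hp r hr
        exact ⟨⟨c, subset_closure hcR⟩, by rwa [mem_ball, Subtype.dist_eq], hcO⟩
    intro ε hε
    obtain ⟨q, hq_ball, hq_mem⟩ := Metric.dense_iff.mp hdense ⟨π, hπD⟩ ε hε
    set f : C(X, Y) := q.val with hf
    have hdist : dist f π < ε := by
      rw [mem_ball] at hq_ball
      rwa [Subtype.dist_eq] at hq_ball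
    have hfO : ∀ n, f ∈ O n := by
      intro n
      have := Set.mem_iInter.mp hq_mem n
      exact this
    have hfD : (f : C(X,Y)) ∈ D := q.2
    -- injectivity
    have hfi : Function.Injective f := by
      intro x x' hxx'
      by_contra hne
      have hd : 0 < dist x x' := dist_pos.mpr hne
      obtain ⟨n, hn⟩ := exists_nat_one_div_lt hd
      have := hfO n x x' hxx'
      linarith
    -- surjectivity
    have hfs : Function.Surjective f := by
      have hclosed : IsClosed (Set.range f) := (isCompact_range f.continuous).isClosed
      have hdense' : Dense (Set.range f) := by
        rw [Metric.dense_iff]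
        intro y r hr
        obtain ⟨q', ⟨g, rfl⟩, hq'⟩ := Metric.mem_closure_iff.mp hfD r hr
        obtain ⟨x, hx⟩ := hsurj y
        refine ⟨f (g.symm x), ?_, Set.mem_range_self _⟩
        rw [mem_ball]
        have h1 : dist (f (g.symm x)) ((π.comp (g : C(X,X))) (g.symm x)) ≤
            dist f (π.comp (g : C(X,X))) := ContinuousMap.dist_apply_le_dist _
        have h2 : (π.comp (g : C(X,X))) (g.symm x) = y := by simp [hx]
        rw [h2] at h1
        exact lt_of_le_of_lt h1 hq'
      have : Set.range f = Set.univ := hclosed.closure_eq ▸ hdense'.closure_eq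
      exact Set.range_eq_univ.mp this
    let e : X ≃ Y := Equiv.ofBijective f ⟨hfi, hfs⟩
    have hce : Continuous e := f.continuous
    refine ⟨hce.homeoOfEquivCompactToT2, ?_⟩
    have heq : ((hce.homeoOfEquivCompactToT2 : X ≃ₜ Y) : C(X,Y)) = f := by
      ext x; rfl
    rw [heq]
    exact hdist
  exact ⟨key, (key 1 one_pos).elim fun H _ => ⟨H⟩⟩
end

section
/- Let X be a compact metric space, Y a metric space, and ε > 0. The set E_ε of continuous maps f : X → Y such that every fiber f⁻¹(y) has diameter strictly less than ε is open in C(X,Y) with the supremum metric. -/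
/-- The set of continuous maps from a compact metric space `X` to a metric
space `Y` all of whose fibers have diameter strictly less than `ε` is open in
`C(X,Y)` with the supremum metric. -/
theorem isOpen_small_fibers
    {X Y : Type*} [MetricSpace X] [CompactSpace X] [MetricSpace Y]
    (ε : ℝ) (hε : 0 < ε) :
    IsOpen {f : C(X, Y) | ∀ y : Y, Metric.diam ((f : X → Y) ⁻¹' {y}) < ε} := by
  rw [Metric.isOpen_iff]
  intro f hf
  by_cases hX : Nonempty X
  · -- the set of pairs in the same fiber
    set S : Set (X × X) := {p | f p.1 = f p.2} with hS
    have hSclosed : IsClosed S :=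
      isClosed_eq (f.continuous.comp continuous_fst) (f.continuous.comp continuous_snd)
    have hScomp : IsCompact S := hSclosed.isCompact
    have hSne : S.Nonempty := ⟨(Classical.arbitrary X, Classical.arbitrary X), rfl⟩
    obtain ⟨p, hpS, hpmax⟩ :=
      hScomp.exists_isMaxOn hSne (continuous_dist.continuousOn)
    rw [isMaxOn_iff] at hpmax
    set M : ℝ := dist p.1 p.2 with hM
    have hMlt : M < ε := by
      have hb : Bornology.IsBounded ((f : X → Y) ⁻¹' {f p.1}) :=
        ((isClosed_singleton.preimage f.continuous).isCompact).isBounded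
      have h1 : p.1 ∈ (f : X → Y) ⁻¹' {f p.1} := rfl
      have h2 : p.2 ∈ (f : X → Y) ⁻¹' {f p.1} := by
        simp only [Set.mem_preimage, Set.mem_singleton_iff]
        exact hpS.symm
      calc M ≤ Metric.diam ((f : X → Y) ⁻¹' {f p.1}) :=
              Metric.dist_le_diam_of_mem hb h1 h2
        _ < ε := hf (f p.1)
    set ε' : ℝ := (M + ε) / 2 with hε'
    have hMε' : M < ε' := by simp only [hε']; linarith
    have hε'ε : ε' < ε := by simp only [hε']; linarith
    have hε'nonneg : 0 ≤ ε' := le_trans dist_nonneg hMε'.le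
    -- key uniform step
    have key : ∃ η > 0, ∀ x x' : X, dist (f x) (f x') < η → dist x x' ≤ ε' := by
      by_contra h
      push_neg at h
      have hseq : ∀ n : ℕ, ∃ q : X × X,
          dist (f q.1) (f q.2) < 1 / (n + 1) ∧ ε' < dist q.1 q.2 := by
        intro n
        obtain ⟨x, x', h1, h2⟩ := h (1 / (n + 1)) (by positivity)
        exact ⟨(x, x'), h1, h2⟩
      choose q hq1 hq2 using hseq
      obtain ⟨a, -, φ, hφ, hlim⟩ := isCompact_univ.tendsto_subseq
        (fun n => Set.mem_univ (q n))
      have hlim1 : Filter.Tendsto (fun n => (q (φ n)).1) Filter.atTop (nhds a.1) :=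
        (continuous_fst.tendsto a).comp hlim
      have hlim2 : Filter.Tendsto (fun n => (q (φ n)).2) Filter.atTop (nhds a.2) :=
        (continuous_snd.tendsto a).comp hlim
      have hfa : f a.1 = f a.2 := by
        have hd : Filter.Tendsto (fun n => dist (f (q (φ n)).1) (f (q (φ n)).2))
            Filter.atTop (nhds (dist (f a.1) (f a.2))) :=
          ((f.continuous.tendsto a.1).comp hlim1).dist
            ((f.continuous.tendsto a.2).comp hlim2)
        have h0 : Filter.Tendsto (fun n => dist (f (q (φ n)).1) (f (q (φ n)).2))
            Filter.atTop (nhds 0) := by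
          refine squeeze_zero (fun n => dist_nonneg) (fun n => ?_)
            tendsto_one_div_add_atTop_nhds_zero_nat
          refine (hq1 (φ n)).le.trans ?_
          apply one_div_le_one_div_of_le (by positivity)
          have : (n : ℝ) ≤ (φ n : ℝ) := Nat.cast_le.mpr hφ.le_apply
          linarith
        have := tendsto_nhds_unique hd h0
        exact dist_eq_zero.mp this
      have haS : a ∈ S := hfa
      have hdist : ε' ≤ dist a.1 a.2 := by
        have hd : Filter.Tendsto (fun n => dist (q (φ n)).1 (q (φ n)).2)
            Filter.atTop (nhds (dist a.1 a.2)) := hlim1.dist hlim2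
        exact le_of_tendsto_of_tendsto tendsto_const_nhds hd
          (Filter.Eventually.of_forall fun n => (hq2 (φ n)).le)
      have := hpmax a haS
      linarith
    obtain ⟨η, hη, hkey⟩ := key
    refine ⟨η / 2, by positivity, ?_⟩
    intro g hg y
    have hdiam : Metric.diam ((g : X → Y) ⁻¹' {y}) ≤ ε' := by
      apply Metric.diam_le_of_forall_dist_le hε'nonneg
      intro x hx x' hx'
      simp only [Set.mem_preimage, Set.mem_singleton_iff] at hx hx'
      apply hkey
      have h1 : dist (f x) (g x) ≤ dist f g := ContinuousMap.dist_apply_le_dist x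
      have h2 : dist (g x') (f x') ≤ dist g f := ContinuousMap.dist_apply_le_dist x'
      have hfg : dist f g < η / 2 := by
        rw [dist_comm]; exact Metric.mem_ball.mp hg
      have hgf : dist g f < η / 2 := Metric.mem_ball.mp hg
      have hgxx : dist (g x) (g x') = 0 := by rw [hx, hx']; simp
      calc dist (f x) (f x') ≤ dist (f x) (g x) + dist (g x) (g x') + dist (g x') (f x') :=
            dist_triangle4 _ _ _ _
        _ = dist (f x) (g x) + dist (g x') (f x') := by rw [hgxx]; ring
        _ < η / 2 + η / 2 := by linarith [lt_of_le_of_lt h1 hfg, lt_of_le_of_lt h2 hgf]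
        _ = η := by ring
    exact lt_of_le_of_lt hdiam hε'ε
  · refine ⟨1, one_pos, ?_⟩
    intro g _ y
    have : (g : X → Y) ⁻¹' {y} = ∅ := by
      ext x; exact absurd ⟨x⟩ hX
    rw [this, Metric.diam_empty]
    exact hε
end

section
/- Let n ≥ 1 and let ℓ be a function from finite binary strings to the even natural numbers satisfying: (i) ℓ(∅) = 2n; (ii) for every string σ, 2ℓ(σ) − 4 ≤ ℓ(σ0) + ℓ(σ1); (iii) there exists D such that ℓ(σ) = 0 whenever |σ| ≥ D. Call a string σ 'final-2k' if ℓ(σ) = 2k and ℓ(τ) < 2k for every proper descendant τ of σ. Then for every integer k with 1 ≤ k ≤ n, there are at least 2^{n−k} final-2k strings. -/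
/-!
Fix `k ≥ 1` and show, by induction on the height `D - |σ|` of `σ` above the depth where `ℓ`
vanishes, that a string `σ` with `ℓ σ = 2j ≥ 2k` has at least `2^(j-k)` final-`2k`
descendants. If some proper descendant `τ` has `ℓ τ ≥ ℓ σ`, the bound for `τ` transfers to `σ`.
Otherwise `σ` is itself final-`2j`, which settles `j = k`; for `j > k` both children have value
`< 2j`, so by evenness and the fork inequality both have value exactly `2j - 2`, and their
disjoint sets of final-`2k` descendants contribute `2^(j-1-k)` each.
-/

namespace Bing

def IsFinal (ℓ : List Bool → ℕ) (m : ℕ) (σ : List Bool) : Prop :=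
  ℓ σ = m ∧ ∀ τ : List Bool, σ <+: τ → σ ≠ τ → ℓ τ < m

def finalDescendants (ℓ : List Bool → ℕ) (m : ℕ) (σ : List Bool) : Set (List Bool) :=
  {τ | σ <+: τ ∧ IsFinal ℓ m τ}

lemma add_two_eq_of_even_of_two_mul_le {a b c : ℕ} (ha : Even a) (hb : Even b) (hc : Even c)
    (h : 2 * a ≤ b + c + 4) (hba : b < a) (hca : c < a) : b + 2 = a := by
  obtain ⟨a, rfl⟩ := ha
  obtain ⟨b, rfl⟩ := hb
  obtain ⟨c, rfl⟩ := hc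
  omega

variable {ℓ : List Bool → ℕ} {m : ℕ}

lemma finalDescendants_nil : finalDescendants ℓ m [] = {σ | IsFinal ℓ m σ} := by
  simp [finalDescendants]

lemma finalDescendants_anti {σ τ : List Bool} (h : σ <+: τ) :
    finalDescendants ℓ m τ ⊆ finalDescendants ℓ m σ :=
  fun _ ⟨hτ, hfin⟩ => ⟨h.trans hτ, hfin⟩

lemma disjoint_finalDescendants_append (σ : List Bool) :
    Disjoint (finalDescendants ℓ m (σ ++ [false])) (finalDescendants ℓ m (σ ++ [true])) := by
  refine Set.disjoint_left.mpr fun τ h₀ h₁ => ?_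
  have := List.prefix_of_prefix_length_le h₀.1 h₁.1 (by simp)
  simp at this

lemma finite_finalDescendants {D : ℕ} (hD : ∀ σ : List Bool, D ≤ σ.length → ℓ σ = 0)
    (hm : m ≠ 0) (σ : List Bool) : (finalDescendants ℓ m σ).Finite :=
  (List.finite_length_lt Bool D).subset fun τ ⟨_, hτ, _⟩ => show τ.length < D by
    by_contra! h
    exact hm (hτ ▸ hD τ h)

lemma child_add_two_eq (heven : ∀ σ : List Bool, Even (ℓ σ))
    (hfork : ∀ σ : List Bool, 2 * ℓ σ ≤ ℓ (σ ++ [false]) + ℓ (σ ++ [true]) + 4) {σ : List Bool}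
    (hlt : ∀ b : Bool, ℓ (σ ++ [b]) < ℓ σ) (b : Bool) : ℓ (σ ++ [b]) + 2 = ℓ σ := by
  cases b
  · exact add_two_eq_of_even_of_two_mul_le (heven _) (heven _) (heven _) (hfork σ)
      (hlt false) (hlt true)
  · exact add_two_eq_of_even_of_two_mul_le (heven _) (heven _) (heven _)
      ((hfork σ).trans_eq (by ring)) (hlt true) (hlt false)

theorem two_pow_le_ncard_finalDescendants {k D : ℕ} (hk : 1 ≤ k)
    (heven : ∀ σ : List Bool, Even (ℓ σ))
    (hfork : ∀ σ : List Bool, 2 * ℓ σ ≤ ℓ (σ ++ [false]) + ℓ (σ ++ [true]) + 4)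
    (hD : ∀ σ : List Bool, D ≤ σ.length → ℓ σ = 0) {σ : List Bool} {j : ℕ} (hkj : k ≤ j)
    (hσ : ℓ σ = 2 * j) : 2 ^ (j - k) ≤ (finalDescendants ℓ (2 * k) σ).ncard := by
  have hfin := finite_finalDescendants hD (m := 2 * k) (by omega)
  induction hd : D - σ.length using Nat.strong_induction_on generalizing σ j with
  | _ d ih =>
  have hσD : σ.length < D := by
    by_contra! h
    have := hD σ h
    omega
  by_cases hdesc : ∃ τ, σ <+: τ ∧ σ ≠ τ ∧ ℓ σ ≤ ℓ τ
  · obtain ⟨τ, hστ, hne, hle⟩ := hdesc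
    have hlen : σ.length < τ.length :=
      lt_of_not_ge fun h => hne (hστ.eq_of_length_le h)
    obtain ⟨j', hj'⟩ := heven τ
    calc 2 ^ (j - k) ≤ 2 ^ (j' - k) := Nat.pow_le_pow_right two_pos (by omega)
      _ ≤ (finalDescendants ℓ (2 * k) τ).ncard := ih _ (by omega) (by omega) (by omega) rfl
      _ ≤ (finalDescendants ℓ (2 * k) σ).ncard :=
        Set.ncard_le_ncard (finalDescendants_anti hστ) (hfin σ)
  push Not at hdesc
  rcases hkj.eq_or_lt with rfl | hkj
  · have hself : σ ∈ finalDescendants ℓ (2 * k) σ :=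
      ⟨List.prefix_refl σ, hσ, fun τ hστ hne => hσ ▸ hdesc τ hστ hne⟩
    rw [Nat.sub_self, pow_zero]
    exact (Set.ncard_pos (hfin σ)).mpr ⟨σ, hself⟩
  have hchild (b : Bool) : 2 ^ (j - 1 - k) ≤ (finalDescendants ℓ (2 * k) (σ ++ [b])).ncard := by
    have hval := child_add_two_eq heven hfork (fun c => hdesc _ (σ.prefix_append _) (by simp)) b
    exact ih _ (by simp only [List.length_append, List.length_singleton]; omega) (by omega)
      (by omega) rfl
  calc 2 ^ (j - k) = 2 ^ (j - 1 - k) + 2 ^ (j - 1 - k) := by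
        rw [← two_mul, ← pow_succ']
        congr 1
        omega
    _ ≤ (finalDescendants ℓ (2 * k) (σ ++ [false]) ∪
          finalDescendants ℓ (2 * k) (σ ++ [true])).ncard := by
        rw [Set.ncard_union_eq (disjoint_finalDescendants_append σ) (hfin _) (hfin _)]
        exact Nat.add_le_add (hchild false) (hchild true)
    _ ≤ (finalDescendants ℓ (2 * k) σ).ncard :=
        Set.ncard_le_ncard (Set.union_subset (finalDescendants_anti (σ.prefix_append _))
          (finalDescendants_anti (σ.prefix_append _))) (hfin σ)

end Bing

theorem final_2k_count_general (n : ℕ) (ℓ : List Bool → ℕ)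
    (heven : ∀ σ : List Bool, Even (ℓ σ))
    (hroot : ℓ [] = 2 * n)
    (hfork : ∀ σ : List Bool, 2 * ℓ σ ≤ ℓ (σ ++ [false]) + ℓ (σ ++ [true]) + 4)
    (hshrink : ∃ D : ℕ, ∀ σ : List Bool, D ≤ σ.length → ℓ σ = 0) :
    ∀ k : ℕ, 1 ≤ k → k ≤ n →
      2 ^ (n - k) ≤ Set.ncard {σ : List Bool |
        ℓ σ = 2 * k ∧ ∀ τ : List Bool, σ <+: τ → σ ≠ τ → ℓ τ < 2 * k} := by
  intro k hk hkn
  obtain ⟨D, hD⟩ := hshrink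
  have h := Bing.two_pow_le_ncard_finalDescendants hk heven hfork hD hkn hroot
  rwa [Bing.finalDescendants_nil] at h

/-- Counting final-`2k` vertices in the Bing tree: if an even-valued length
function on the complete binary tree has root value `2n`, satisfies Bing's
fork inequality `2ℓ(σ) - 4 ≤ ℓ(σ0) + ℓ(σ1)`, and vanishes at sufficient depth,
then for every `1 ≤ k ≤ n` there are at least `2^(n-k)` strings `σ` with
`ℓ(σ) = 2k` and `ℓ(τ) < 2k` for every proper descendant `τ` of `σ`. -/
theorem final_2k_count (n : ℕ) (hn : 1 ≤ n) (ℓ : List Bool → ℕ)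
    (heven : ∀ σ : List Bool, Even (ℓ σ))
    (hroot : ℓ [] = 2 * n)
    (hfork : ∀ σ : List Bool, 2 * ℓ σ ≤ ℓ (σ ++ [false]) + ℓ (σ ++ [true]) + 4)
    (hshrink : ∃ D : ℕ, ∀ σ : List Bool, D ≤ σ.length → ℓ σ = 0) :
    ∀ k : ℕ, 1 ≤ k → k ≤ n →
      2 ^ (n - k) ≤ Set.ncard {σ : List Bool |
        ℓ σ = 2 * k ∧ ∀ τ : List Bool, σ <+: τ → σ ≠ τ → ℓ τ < 2 * k} :=
  final_2k_count_general n ℓ heven hroot hfork hshrink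
end

section
/- Let f : ℝ → ℝ be continuous and 1-periodic. Suppose f attains its minimum m at θ = 0, attains its maximum M at some c ∈ (0,1), is monotone nondecreasing on [0,c], and monotone nonincreasing on [c,1]. Then sup_{θ} |f(θ) − f(θ + 1/2)| ≥ (M − m)/2. -/
/-- For a continuous `1`-periodic unimodal function attaining its minimum `m`
at `0` and its maximum `M` at `c ∈ (0,1)` (nondecreasing on `[0,c]`,
nonincreasing on `[c,1]`), the antipodal oscillation satisfies
`sup_θ |f(θ) − f(θ + 1/2)| ≥ (M − m)/2`. -/
theorem half_shift_oscillation (f : ℝ → ℝ) (hf : Continuous f)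
    (hper : ∀ x : ℝ, f (x + 1) = f x)
    (m M c : ℝ) (hc : c ∈ Set.Ioo (0 : ℝ) 1)
    (hm0 : f 0 = m) (hm : ∀ θ : ℝ, m ≤ f θ)
    (hMc : f c = M) (hM : ∀ θ : ℝ, f θ ≤ M)
    (hmono : MonotoneOn f (Set.Icc 0 c))
    (hanti : AntitoneOn f (Set.Icc c 1)) :
    (M - m) / 2 ≤ ⨆ θ : ℝ, |f θ - f (θ + 1 / 2)| := by
  obtain ⟨hc0, hc1⟩ := hc
  have hbdd : BddAbove (Set.range fun θ : ℝ => |f θ - f (θ + 1 / 2)|) := by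
    refine ⟨M - m, ?_⟩
    rintro x ⟨θ, rfl⟩
    have h1 := hm θ; have h2 := hM θ
    have h3 := hm (θ + 1 / 2); have h4 := hM (θ + 1 / 2)
    rw [abs_le]; constructor <;> linarith
  have key : ∃ θ : ℝ, (M - m) / 2 ≤ |f θ - f (θ + 1 / 2)| := by
    by_contra h
    push_neg at h
    have hmM : m ≤ M := le_trans (hm c) (hM c)
    have hA : (M + m) / 2 < f (c + 1 / 2) := by
      have := h c
      rw [hMc, abs_lt] at this
      linarith [this.2]
    have hB : f (1 / 2) < (M + m) / 2 := by
      have h' := h (-(1 / 2 : ℝ))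
      have h2 := hper (-(1 / 2 : ℝ))
      norm_num at h' h2
      rw [hm0, ← h2, abs_lt] at h'
      linarith [h'.1]
    rcases le_or_gt c (1 / 2) with hle | hlt
    · have h12 : (1/2 : ℝ) ∈ Set.Icc c 1 := ⟨hle, by norm_num⟩
      have hc2 : c + 1/2 ∈ Set.Icc c 1 := ⟨by linarith, by linarith⟩
      have := hanti h12 hc2 (by linarith)
      linarith
    · have heq : f (c + 1/2) = f (c - 1/2) := by
        have := hper (c - 1/2)
        rw [show c - 1/2 + 1 = c + 1/2 by ring] at this
        exact this
      have hc2 : c - 1/2 ∈ Set.Icc (0:ℝ) c := ⟨by linarith, by linarith⟩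
      have h12 : (1/2 : ℝ) ∈ Set.Icc (0:ℝ) c := ⟨by norm_num, by linarith⟩
      have := hmono hc2 h12 (by linarith)
      rw [heq] at hA
      linarith
  obtain ⟨θ, hθ⟩ := key
  exact le_trans hθ (le_ciSup hbdd θ)
end
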